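/- (Recursive compatibility) Let {P_0,…,P_{g−1}} be a set of g n×n PDAs Blackburn-compatible w.r.t. an n×n PDA P_*, and let π be the cyclic shift l ↦ l+1 mod g on [g]. For i ∈ [g], define the gn×gn array P'_i whose diagonal blocks are P_{π^i(1)}, P_{π^i(2)}, …, P_{π^i(g)} and whose (j,k) off-diagonal block is a fixed integer-disjoint copy P_*(S_{jk}) of P_* (the same copy at the same position in every P'_i, with all copies pairwise integer-disjoint and disjoint from the integers of the P_l). Define P'_* as the gn×gn array with one common integer-disjoint copy of P_* on every diagonal block and all-∗ off-diagonal blocks. Then {P'_0, …, P'_{g−1}} is a set of g gn×gn PDAs Blackburn-compatible w.r.t. P'_*. -/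

import Mathlib

open Finset

/-- Number of stars (`none`) in column `k` of the array `P`. -/
def colStars {f K : ℕ} (P : Fin f → Fin K → Option ℕ) (k : Fin K) : ℕ :=
  (Finset.univ.filter fun j => P j k = none).card

/-- `P` is a `(K, f, Z, S)` placement delivery array: an `f × K` array over `{∗} ∪ S`
(`none` encodes `∗`) with exactly `Z` stars in each column, every integer of `S`
occurring at least once (and all integer entries lying in `S`), satisfying the
Blackburn property. -/
def IsPDA {f K : ℕ} (P : Fin f → Fin K → Option ℕ) (Z : ℕ) (S : Finset ℕ) : Prop :=
  (∀ k, colStars P k = Z) ∧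
  (∀ s ∈ S, ∃ j k, P j k = some s) ∧
  (∀ j k s, P j k = some s → s ∈ S) ∧
  (∀ j₁ k₁ j₂ k₂ s, (j₁, k₁) ≠ (j₂, k₂) →
    P j₁ k₁ = some s → P j₂ k₂ = some s → P j₁ k₂ = none ∧ P j₂ k₁ = none)

/-- Every integer of `S` appears exactly `g` times in the array `P`. -/
def IsRegularPDA {f K : ℕ} (P : Fin f → Fin K → Option ℕ) (S : Finset ℕ) (g : ℕ) : Prop :=
  ∀ s ∈ S, ((Finset.univ : Finset (Fin f × Fin K)).filter
    (fun jk => P jk.1 jk.2 = some s)).card = g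

/-- `P₀` and `P₁` are Blackburn-compatible with respect to `Pstar`. -/
def BBCompat {n m : ℕ} (P₀ P₁ Pstar : Fin n → Fin m → Option ℕ) : Prop :=
  ∀ i₀ j₀ i₁ j₁ s, P₀ i₀ j₀ = some s → P₁ i₁ j₁ = some s →
    Pstar i₀ j₁ = none ∧ Pstar i₁ j₀ = none

/-- `Ig n t` is the `n × n` array with the integer `t` on the main diagonal and `∗`
elsewhere. -/
def Ig (n t : ℕ) : Fin n → Fin n → Option ℕ := fun i j => if i = j then some t else none

/-- Block-row index of a global index for an array built from `a × a` grids of `b`-sized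
blocks. -/
def blkIdx {a b : ℕ} (j : Fin (a * b)) : Fin a :=
  ⟨(j : ℕ) / b, Nat.div_lt_of_lt_mul (Nat.mul_comm a b ▸ j.isLt)⟩

/-- Within-block index of a global index. -/
def inIdx {a b : ℕ} (j : Fin (a * b)) : Fin b :=
  ⟨(j : ℕ) % b, Nat.mod_lt _ (by
    rcases Nat.eq_zero_or_pos b with h | h
    · exact absurd j.isLt (by simp [h])
    · exact h)⟩

/-- `liftShift P Pstar φ i` is the `gn × gn` array `P'_i`: diagonal block `k` carries
`P (k + i)` (cyclic shift of the diagonal blocks) and off-diagonal block `(j,k)` carries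
the fixed integer-disjoint copy of `Pstar` relabeled by `φ j k` (the same copy at the
same position in every `P'_i`). -/
def liftShift {n g : ℕ} (P : Fin g → Fin n → Fin n → Option ℕ)
    (Pstar : Fin n → Fin n → Option ℕ) (φ : Fin g → Fin g → ℕ → ℕ) (i : Fin g) :
    Fin (g * n) → Fin (g * n) → Option ℕ :=
  fun x y =>
    if blkIdx x = blkIdx y then P (blkIdx x + i) (inIdx x) (inIdx y)
    else (Pstar (inIdx x) (inIdx y)).map (φ (blkIdx x) (blkIdx y))

/-- `diagStar Pstar ψ` is the `gn × gn` array `P'_*`: one common integer-disjoint copy of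
`Pstar` (relabeled by `ψ`) on every diagonal block and all-`∗` off-diagonal blocks. -/
def diagStar {n : ℕ} (g : ℕ) (Pstar : Fin n → Fin n → Option ℕ) (ψ : ℕ → ℕ) :
    Fin (g * n) → Fin (g * n) → Option ℕ :=
  fun x y => if blkIdx x = blkIdx y then (Pstar (inIdx x) (inIdx y)).map ψ else none

/-!
An integer of `P'_i` comes either from a diagonal block `P_l` or from exactly one off-diagonal
copy `φ j k` of `P_*`, and the two kinds of integers never coincide. So two equal entries lie
either both in diagonal blocks or in the same off-diagonal block. In the second case the
Blackburn property of `P_*` gives the stars, in the first the Blackburn property of `P_l` (same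
block) or the compatibility of two different `P_l` w.r.t. `P_*` (different blocks), whose stars
reappear in the off-diagonal copies of `P_*` and in the diagonal copies of `P_*` inside `P'_*`.
Every other cross entry of `P'_*` lies off the diagonal blocks, hence is `∗`. Each column of
`P'_i` meets one diagonal block and `g - 1` copies of `P_*`, whence `Zc + (g - 1) Zs` stars.
-/

section BlockIndex

variable {a b : ℕ}

lemma finProdFinEquiv_symm_eq (x : Fin (a * b)) :
    finProdFinEquiv.symm x = (blkIdx x, inIdx x) := rfl

@[simp] lemma blkIdx_finProdFinEquiv (p : Fin a × Fin b) : blkIdx (finProdFinEquiv p) = p.1 :=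
  congrArg Prod.fst ((finProdFinEquiv_symm_eq _).symm.trans (finProdFinEquiv.symm_apply_apply p))

@[simp] lemma inIdx_finProdFinEquiv (p : Fin a × Fin b) : inIdx (finProdFinEquiv p) = p.2 :=
  congrArg Prod.snd ((finProdFinEquiv_symm_eq _).symm.trans (finProdFinEquiv.symm_apply_apply p))

lemma eq_of_blkIdx_eq_of_inIdx_eq {x y : Fin (a * b)} (hB : blkIdx x = blkIdx y)
    (hr : inIdx x = inIdx y) : x = y :=
  finProdFinEquiv.symm.injective (by rw [finProdFinEquiv_symm_eq, finProdFinEquiv_symm_eq, hB, hr])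

lemma inIdx_pair_ne_of_blkIdx_eq {x₁ y₁ x₂ y₂ : Fin (a * b)} (hne : (x₁, y₁) ≠ (x₂, y₂))
    (hx : blkIdx x₁ = blkIdx x₂) (hy : blkIdx y₁ = blkIdx y₂) :
    (inIdx x₁, inIdx y₁) ≠ (inIdx x₂, inIdx y₂) := by
  intro h
  obtain ⟨h₁, h₂⟩ := Prod.ext_iff.1 h
  exact hne (Prod.ext (eq_of_blkIdx_eq_of_inIdx_eq hx h₁) (eq_of_blkIdx_eq_of_inIdx_eq hy h₂))

lemma colStars_eq_sum_blocks {K : ℕ} (A : Fin (a * b) → Fin K → Option ℕ) (k : Fin K) :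
    colStars A k = ∑ B : Fin a, colStars (fun r => A (finProdFinEquiv (B, r))) k := by
  unfold colStars
  simp only [Finset.card_filter]
  rw [← finProdFinEquiv.sum_comp, Fintype.sum_prod_type]

end BlockIndex

lemma colStars_congr {f K K' : ℕ} {A : Fin f → Fin K → Option ℕ} {A' : Fin f → Fin K' → Option ℕ}
    {k : Fin K} {k' : Fin K'} (h : ∀ j, A j k = none ↔ A' j k' = none) :
    colStars A k = colStars A' k' := by
  simp only [colStars, h]

lemma eq_and_eq_of_apply_eq_apply {ι α β : Type*} [DecidableEq β] {S : Finset α}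
    {f : ι → α → β} (hinj : ∀ i, Set.InjOn (f i) S)
    (hdisj : ∀ i j, i ≠ j → Disjoint (S.image (f i)) (S.image (f j)))
    {i j : ι} {x y : α} (hx : x ∈ S) (hy : y ∈ S) (h : f i x = f j y) : i = j ∧ x = y := by
  obtain rfl : i = j := by
    by_contra hij
    exact Finset.disjoint_left.1 (hdisj i j hij) (Finset.mem_image_of_mem _ hx)
      (h ▸ Finset.mem_image_of_mem _ hy)
  exact ⟨rfl, hinj i hx hy h⟩

lemma diagStar_of_blkIdx_ne {n g : ℕ} {Pstar : Fin n → Fin n → Option ℕ} {ψ : ℕ → ℕ}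
    {x y : Fin (g * n)} (h : blkIdx x ≠ blkIdx y) : diagStar g Pstar ψ x y = none :=
  if_neg h

lemma diagStar_eq_none {n g : ℕ} {Pstar : Fin n → Fin n → Option ℕ} {ψ : ℕ → ℕ}
    {x y : Fin (g * n)} (h : Pstar (inIdx x) (inIdx y) = none) :
    diagStar g Pstar ψ x y = none := by
  unfold diagStar
  split_ifs <;> simp [h]

section LiftShift

variable {n g : ℕ} {P : Fin g → Fin n → Fin n → Option ℕ} {Pstar : Fin n → Fin n → Option ℕ}
  {φ : Fin g → Fin g → ℕ → ℕ} {Sl : Fin g → Finset ℕ} {Ss : Finset ℕ} {Zc Zs : ℕ}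
  {i : Fin g} {x y : Fin (g * n)} {s : ℕ}

lemma liftShift_of_blkIdx_eq (h : blkIdx x = blkIdx y) :
    liftShift P Pstar φ i x y = P (blkIdx x + i) (inIdx x) (inIdx y) :=
  if_pos h

lemma liftShift_of_blkIdx_ne (h : blkIdx x ≠ blkIdx y) :
    liftShift P Pstar φ i x y = (Pstar (inIdx x) (inIdx y)).map (φ (blkIdx x) (blkIdx y)) :=
  if_neg h

lemma liftShift_eq_none_of_blkIdx_ne (h : blkIdx x ≠ blkIdx y)
    (hstar : Pstar (inIdx x) (inIdx y) = none) : liftShift P Pstar φ i x y = none := by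
  rw [liftShift_of_blkIdx_ne h, hstar, Option.map_none]

lemma liftShift_eq_some_iff :
    liftShift P Pstar φ i x y = some s ↔
      (blkIdx x = blkIdx y ∧ P (blkIdx x + i) (inIdx x) (inIdx y) = some s) ∨
      (blkIdx x ≠ blkIdx y ∧ ∃ t, Pstar (inIdx x) (inIdx y) = some t ∧
        φ (blkIdx x) (blkIdx y) t = s) := by
  by_cases h : blkIdx x = blkIdx y
  · simp [liftShift_of_blkIdx_eq h, h]
  · simp [liftShift_of_blkIdx_ne h, h]

lemma colStars_liftShift (hP : ∀ l k, colStars (P l) k = Zc)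
    (hstar : ∀ k, colStars Pstar k = Zs) (y : Fin (g * n)) :
    colStars (liftShift P Pstar φ i) y = Zc + (g - 1) * Zs := by
  have hblock : ∀ B, colStars (fun r => liftShift P Pstar φ i (finProdFinEquiv (B, r))) y
      = if B = blkIdx y then Zc else Zs := by
    intro B
    split_ifs with hB
    · refine (colStars_congr fun r => ?_).trans (hP (blkIdx y + i) (inIdx y))
      rw [liftShift_of_blkIdx_eq (by simpa using hB)]
      simp [hB]
    · refine (colStars_congr fun r => ?_).trans (hstar (inIdx y))
      rw [liftShift_of_blkIdx_ne (by simpa using hB)]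
      simp
  rw [colStars_eq_sum_blocks, Finset.sum_congr rfl fun B _ => hblock B,
    Fintype.sum_eq_add_sum_compl (blkIdx y), if_pos rfl,
    Finset.sum_congr rfl fun B hB => if_neg (Finset.mem_compl.1 hB ∘ Finset.mem_singleton.2)]
  simp [Finset.card_compl]

lemma exists_liftShift_eq_some (hP : ∀ l, ∀ s ∈ Sl l, ∃ j k, P l j k = some s)
    (hstar : ∀ s ∈ Ss, ∃ j k, Pstar j k = some s)
    (hs : s ∈ Finset.univ.biUnion Sl ∪
      (Finset.univ.filter fun p : Fin g × Fin g => p.1 ≠ p.2).biUnion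
        fun p => Ss.image (φ p.1 p.2)) :
    ∃ x y, liftShift P Pstar φ i x y = some s := by
  have : NeZero g := ⟨i.pos.ne'⟩
  rcases Finset.mem_union.1 hs with hs | hs
  · obtain ⟨l, -, hl⟩ := Finset.mem_biUnion.1 hs
    obtain ⟨j, k, hjk⟩ := hP l s hl
    refine ⟨finProdFinEquiv (l - i, j), finProdFinEquiv (l - i, k), ?_⟩
    rw [liftShift_of_blkIdx_eq (by simp)]
    simpa using hjk
  · obtain ⟨⟨B, C⟩, hBC, hs⟩ := Finset.mem_biUnion.1 hs
    obtain ⟨t, ht, rfl⟩ := Finset.mem_image.1 hs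
    obtain ⟨j, k, hjk⟩ := hstar t ht
    refine ⟨finProdFinEquiv (B, j), finProdFinEquiv (C, k), ?_⟩
    rw [liftShift_of_blkIdx_ne (by simpa using (Finset.mem_filter.1 hBC).2)]
    simp [hjk]

lemma liftShift_mem (hP : ∀ l j k s, P l j k = some s → s ∈ Sl l)
    (hstar : ∀ j k s, Pstar j k = some s → s ∈ Ss)
    (h : liftShift P Pstar φ i x y = some s) :
    s ∈ Finset.univ.biUnion Sl ∪
      (Finset.univ.filter fun p : Fin g × Fin g => p.1 ≠ p.2).biUnion
        fun p => Ss.image (φ p.1 p.2) := by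
  rcases liftShift_eq_some_iff.1 h with ⟨-, h⟩ | ⟨hB, t, ht, rfl⟩
  · exact Finset.mem_union_left _ (Finset.mem_biUnion.2 ⟨_, Finset.mem_univ _, hP _ _ _ _ h⟩)
  · exact Finset.mem_union_right _ (Finset.mem_biUnion.2 ⟨(blkIdx x, blkIdx y),
      Finset.mem_filter.2 ⟨Finset.mem_univ _, hB⟩, Finset.mem_image_of_mem _ (hstar _ _ _ ht)⟩)

lemma liftShift_eq_some_cases (hP : ∀ l j k s, P l j k = some s → s ∈ Sl l)
    (hstar : ∀ j k s, Pstar j k = some s → s ∈ Ss)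
    (hinjφ : ∀ j k, Set.InjOn (φ j k) ↑Ss)
    (hφdisj : ∀ j k j' k' : Fin g, (j, k) ≠ (j', k') →
      Disjoint (Ss.image (φ j k)) (Ss.image (φ j' k')))
    (hφS : ∀ j k l, Disjoint (Ss.image (φ j k)) (Sl l))
    {i' : Fin g} {x₀ y₀ x₁ y₁ : Fin (g * n)}
    (h₀ : liftShift P Pstar φ i x₀ y₀ = some s) (h₁ : liftShift P Pstar φ i' x₁ y₁ = some s) :
    (blkIdx x₀ = blkIdx y₀ ∧ blkIdx x₁ = blkIdx y₁ ∧
      P (blkIdx x₀ + i) (inIdx x₀) (inIdx y₀) = some s ∧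
      P (blkIdx x₁ + i') (inIdx x₁) (inIdx y₁) = some s) ∨
    (blkIdx x₀ ≠ blkIdx y₀ ∧ blkIdx x₀ = blkIdx x₁ ∧ blkIdx y₀ = blkIdx y₁ ∧
      ∃ t, Pstar (inIdx x₀) (inIdx y₀) = some t ∧ Pstar (inIdx x₁) (inIdx y₁) = some t) := by
  have not_diag_off : ∀ {B C l t}, t ∈ Ss → φ B C t ∈ Sl l → False := fun ht hs =>
    Finset.disjoint_left.1 (hφS _ _ _) (Finset.mem_image_of_mem _ ht) hs
  rcases liftShift_eq_some_iff.1 h₀ with ⟨hB₀, e₀⟩ | ⟨hB₀, t₀, e₀, rfl⟩ <;>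
    rcases liftShift_eq_some_iff.1 h₁ with ⟨hB₁, e₁⟩ | ⟨hB₁, t₁, e₁, f₁⟩
  · exact Or.inl ⟨hB₀, hB₁, e₀, e₁⟩
  · exact (not_diag_off (hstar _ _ _ e₁) (f₁ ▸ hP _ _ _ _ e₀)).elim
  · exact (not_diag_off (hstar _ _ _ e₀) (hP _ _ _ _ e₁)).elim
  · obtain ⟨hblk, rfl⟩ := eq_and_eq_of_apply_eq_apply (f := fun p : Fin g × Fin g => φ p.1 p.2)
      (i := (blkIdx x₀, blkIdx y₀)) (j := (blkIdx x₁, blkIdx y₁))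
      (fun p => hinjφ p.1 p.2) (fun p q hpq => hφdisj p.1 p.2 q.1 q.2 hpq)
      (hstar _ _ _ e₀) (hstar _ _ _ e₁) f₁.symm
    obtain ⟨hx, hy⟩ := Prod.ext_iff.1 hblk
    exact Or.inr ⟨hB₀, hx, hy, t₀, e₀, e₁⟩

lemma liftShift_blackburn (hP : ∀ l, IsPDA (P l) Zc (Sl l)) (hstar : IsPDA Pstar Zs Ss)
    (hcompat : ∀ l l', l ≠ l' → BBCompat (P l) (P l') Pstar)
    (hinjφ : ∀ j k, Set.InjOn (φ j k) ↑Ss)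
    (hφdisj : ∀ j k j' k' : Fin g, (j, k) ≠ (j', k') →
      Disjoint (Ss.image (φ j k)) (Ss.image (φ j' k')))
    (hφS : ∀ j k l, Disjoint (Ss.image (φ j k)) (Sl l)) {x₁ y₁ x₂ y₂ : Fin (g * n)}
    (hne : (x₁, y₁) ≠ (x₂, y₂)) (h₁ : liftShift P Pstar φ i x₁ y₁ = some s)
    (h₂ : liftShift P Pstar φ i x₂ y₂ = some s) :
    liftShift P Pstar φ i x₁ y₂ = none ∧ liftShift P Pstar φ i x₂ y₁ = none := by
  rcases liftShift_eq_some_cases (fun l => (hP l).2.2.1) hstar.2.2.1 hinjφ hφdisj hφS h₁ h₂ with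
    ⟨hB₁, hB₂, e₁, e₂⟩ | ⟨hB, hx, hy, t, e₁, e₂⟩
  · by_cases hx : blkIdx x₁ = blkIdx x₂
    · rw [← hx] at e₂
      have hin := inIdx_pair_ne_of_blkIdx_eq hne hx (by rw [← hB₁, ← hB₂, hx])
      obtain ⟨n₁, n₂⟩ := (hP _).2.2.2 _ _ _ _ s hin e₁ e₂
      rw [liftShift_of_blkIdx_eq (hx.trans hB₂), liftShift_of_blkIdx_eq (hx.symm.trans hB₁), ← hx]
      exact ⟨n₁, n₂⟩
    · obtain ⟨n₁, n₂⟩ := hcompat _ _ (fun h => hx (add_right_cancel h)) _ _ _ _ s e₁ e₂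
      exact ⟨liftShift_eq_none_of_blkIdx_ne (hB₂ ▸ hx) n₁,
        liftShift_eq_none_of_blkIdx_ne (hB₁ ▸ Ne.symm hx) n₂⟩
  · obtain ⟨n₁, n₂⟩ := hstar.2.2.2 _ _ _ _ t (inIdx_pair_ne_of_blkIdx_eq hne hx hy) e₁ e₂
    exact ⟨liftShift_eq_none_of_blkIdx_ne (hy ▸ hB) n₁,
      liftShift_eq_none_of_blkIdx_ne (hx ▸ hy ▸ hB) n₂⟩

lemma bbCompat_liftShift (hP : ∀ l j k s, P l j k = some s → s ∈ Sl l)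
    (hstar : ∀ j k s, Pstar j k = some s → s ∈ Ss)
    (hcompat : ∀ l l', l ≠ l' → BBCompat (P l) (P l') Pstar)
    (hinjφ : ∀ j k, Set.InjOn (φ j k) ↑Ss)
    (hφdisj : ∀ j k j' k' : Fin g, (j, k) ≠ (j', k') →
      Disjoint (Ss.image (φ j k)) (Ss.image (φ j' k')))
    (hφS : ∀ j k l, Disjoint (Ss.image (φ j k)) (Sl l)) (ψ : ℕ → ℕ) {i' : Fin g}
    (hii' : i ≠ i') :
    BBCompat (liftShift P Pstar φ i) (liftShift P Pstar φ i') (diagStar g Pstar ψ) := by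
  intro x₀ y₀ x₁ y₁ t h₀ h₁
  rcases liftShift_eq_some_cases hP hstar hinjφ hφdisj hφS h₀ h₁ with
    ⟨hB₀, hB₁, e₀, e₁⟩ | ⟨hB, hx, hy, -⟩
  · by_cases hl : blkIdx x₀ + i = blkIdx x₁ + i'
    · -- the same `P l` sits in different diagonal blocks of `P'_i` and `P'_{i'}`
      have hx : blkIdx x₀ ≠ blkIdx x₁ := fun h => hii' (add_left_cancel (h ▸ hl))
      exact ⟨diagStar_of_blkIdx_ne (hB₁ ▸ hx), diagStar_of_blkIdx_ne (hB₀ ▸ Ne.symm hx)⟩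
    · obtain ⟨n₀, n₁⟩ := hcompat _ _ hl _ _ _ _ t e₀ e₁
      exact ⟨diagStar_eq_none n₀, diagStar_eq_none n₁⟩
  · exact ⟨diagStar_of_blkIdx_ne (hy ▸ hB), diagStar_of_blkIdx_ne (hx ▸ hy ▸ hB)⟩

theorem isPDA_liftShift (hP : ∀ l, IsPDA (P l) Zc (Sl l)) (hstar : IsPDA Pstar Zs Ss)
    (hcompat : ∀ l l', l ≠ l' → BBCompat (P l) (P l') Pstar)
    (hinjφ : ∀ j k, Set.InjOn (φ j k) ↑Ss)
    (hφdisj : ∀ j k j' k' : Fin g, (j, k) ≠ (j', k') →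
      Disjoint (Ss.image (φ j k)) (Ss.image (φ j' k')))
    (hφS : ∀ j k l, Disjoint (Ss.image (φ j k)) (Sl l)) :
    IsPDA (liftShift P Pstar φ i) (Zc + (g - 1) * Zs)
      ((Finset.univ.biUnion Sl) ∪
        (((Finset.univ : Finset (Fin g × Fin g)).filter fun p => p.1 ≠ p.2).biUnion
          fun p => Ss.image (φ p.1 p.2))) :=
  ⟨colStars_liftShift (fun l => (hP l).1) hstar.1,
    fun _ hs => exists_liftShift_eq_some (fun l => (hP l).2.1) hstar.2.1 hs,
    fun _ _ _ => liftShift_mem (fun l => (hP l).2.2.1) hstar.2.2.1,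
    fun _ _ _ _ _ hne => liftShift_blackburn hP hstar hcompat hinjφ hφdisj hφS hne⟩

end LiftShift

theorem stmt_16_general {n g Zc Zs : ℕ}
    (P : Fin g → Fin n → Fin n → Option ℕ) (Sl : Fin g → Finset ℕ)
    (Pstar : Fin n → Fin n → Option ℕ) (Ss : Finset ℕ)
    (hP : ∀ l, IsPDA (P l) Zc (Sl l))
    (hstar : IsPDA Pstar Zs Ss)
    (hcompat : ∀ l l', l ≠ l' → BBCompat (P l) (P l') Pstar)
    (φ : Fin g → Fin g → ℕ → ℕ) (ψ : ℕ → ℕ)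
    (hinjφ : ∀ j k, Set.InjOn (φ j k) ↑Ss)
    (hφdisj : ∀ j k j' k' : Fin g, (j, k) ≠ (j', k') →
      Disjoint (Ss.image (φ j k)) (Ss.image (φ j' k')))
    (hφS : ∀ j k l, Disjoint (Ss.image (φ j k)) (Sl l)) :
    (∀ i, IsPDA (liftShift P Pstar φ i) (Zc + (g - 1) * Zs)
      ((Finset.univ.biUnion Sl) ∪
        (((Finset.univ : Finset (Fin g × Fin g)).filter fun p => p.1 ≠ p.2).biUnion
          fun p => Ss.image (φ p.1 p.2)))) ∧
    (∀ i i', i ≠ i' →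
      BBCompat (liftShift P Pstar φ i) (liftShift P Pstar φ i') (diagStar g Pstar ψ)) :=
  ⟨fun _ => isPDA_liftShift hP hstar hcompat hinjφ hφdisj hφS,
    fun _ _ => bbCompat_liftShift (fun l => (hP l).2.2.1) hstar.2.2.1 hcompat hinjφ hφdisj hφS ψ⟩

/-- **Recursive compatibility.** Given `g` `(n, n, Zc)` PDAs `P l`
pairwise Blackburn-compatible w.r.t. the `(n, n, Zs, Ss)` PDA `Pstar`, the arrays
`P'_i = liftShift P Pstar φ i` (with all off-diagonal copies pairwise integer-disjoint
and disjoint from the integers of the `P l` and of the diagonal copy of `P'_*`) form a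
set of `g` `gn × gn` PDAs pairwise Blackburn-compatible w.r.t.
`P'_* = diagStar g Pstar ψ`. -/
theorem stmt_16 {n g Zc Zs : ℕ}
    (P : Fin g → Fin n → Fin n → Option ℕ) (Sl : Fin g → Finset ℕ)
    (Pstar : Fin n → Fin n → Option ℕ) (Ss : Finset ℕ)
    (hP : ∀ l, IsPDA (P l) Zc (Sl l))
    (hstar : IsPDA Pstar Zs Ss)
    (hcompat : ∀ l l', l ≠ l' → BBCompat (P l) (P l') Pstar)
    (φ : Fin g → Fin g → ℕ → ℕ) (ψ : ℕ → ℕ)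
    (hinjφ : ∀ j k, Set.InjOn (φ j k) ↑Ss)
    (hinjψ : Set.InjOn ψ ↑Ss)
    (hφdisj : ∀ j k j' k' : Fin g, (j, k) ≠ (j', k') →
      Disjoint (Ss.image (φ j k)) (Ss.image (φ j' k')))
    (hφS : ∀ j k l, Disjoint (Ss.image (φ j k)) (Sl l))
    (hψS : ∀ l, Disjoint (Ss.image ψ) (Sl l))
    (hψφ : ∀ j k, Disjoint (Ss.image ψ) (Ss.image (φ j k))) :
    (∀ i, IsPDA (liftShift P Pstar φ i) (Zc + (g - 1) * Zs)
      ((Finset.univ.biUnion Sl) ∪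
        (((Finset.univ : Finset (Fin g × Fin g)).filter fun p => p.1 ≠ p.2).biUnion
          fun p => Ss.image (φ p.1 p.2)))) ∧
    (∀ i i', i ≠ i' →
      BBCompat (liftShift P Pstar φ i) (liftShift P Pstar φ i') (diagStar g Pstar ψ)) :=
  stmt_16_general P Sl Pstar Ss hP hstar hcompat φ ψ hinjφ hφdisj hφS
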